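/- arXiv:2103.06835 — 6 statements merged into one kernel-verified Lean document; each statement's English description precedes it below -/
import Mathlib

section
/- If v, w ∈ ℝ³ with ‖v‖ > 1 and ‖w‖ > 1, and the segment from v to w is tangent to the unit sphere at a point τ, then τ = v + (ℓ_v² + ℓ_v·ℓ_w)/(ℓ_v+ℓ_w)² · (w − v), where ℓ_v = √(‖v‖²−1) and ℓ_w = √(‖w‖²−1). -/
/-! Tangency makes `τ` the foot of the perpendicular from the origin to the line `vw`, so by
Pythagoras `dist v τ = ℓ_v` and `dist τ w = ℓ_w`. Since `τ` lies on the segment, it divides `[v, w]`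
in the ratio `ℓ_v : ℓ_w`, i.e. `τ = v + ℓ_v / (ℓ_v + ℓ_w) • (w - v)`. -/

open RealInnerProductSpace

section Segment

variable {E : Type*} [NormedAddCommGroup E] [NormedSpace ℝ E]

theorem eq_add_div_dist_smul_of_mem_segment {v w τ : E} (h : τ ∈ segment ℝ v w) :
    τ = v + (dist v τ / dist v w) • (w - v) := by
  obtain ⟨θ, ⟨hθ₀, -⟩, rfl⟩ := (segment_eq_image' ℝ v w).le h
  rcases eq_or_ne v w with rfl | hvw
  · simp
  have hdist : dist v (v + θ • (w - v)) = θ * dist v w := by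
    rw [dist_eq_norm, sub_add_cancel_left, norm_neg, norm_smul, Real.norm_of_nonneg hθ₀,
      dist_eq_norm, norm_sub_rev]
  rw [hdist, mul_div_cancel_right₀ θ (dist_ne_zero.mpr hvw)]

end Segment

section Tangent

variable {E : Type*} [NormedAddCommGroup E] [InnerProductSpace ℝ E]

theorem inner_eq_norm_sq_of_mem_segment_of_inner_sub_eq_zero {v w τ : E}
    (hseg : τ ∈ segment ℝ v w) (horth : ⟪w - v, τ⟫ = 0) : ⟪v, τ⟫ = ‖τ‖ ^ 2 := by
  obtain ⟨θ, -, hτ : v + θ • (w - v) = τ⟩ := (segment_eq_image' ℝ v w).le hseg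
  calc ⟪v, τ⟫ = ⟪v + θ • (w - v), τ⟫ := by
        rw [inner_add_left, real_inner_smul_left, horth, mul_zero, add_zero]
    _ = ‖τ‖ ^ 2 := by rw [hτ, real_inner_self_eq_norm_sq]

theorem dist_eq_sqrt_of_inner_eq_norm_sq {v τ : E} (h : ⟪v, τ⟫ = ‖τ‖ ^ 2) :
    dist v τ = √(‖v‖ ^ 2 - ‖τ‖ ^ 2) := by
  rw [← Real.sqrt_sq dist_nonneg, dist_eq_norm, norm_sub_sq_real, h]
  ring_nf

theorem dist_eq_sqrt_of_tangent_segment {v w τ : E}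
    (hseg : τ ∈ segment ℝ v w) (horth : ⟪w - v, τ⟫ = 0) :
    dist v τ = √(‖v‖ ^ 2 - ‖τ‖ ^ 2) ∧ dist τ w = √(‖w‖ ^ 2 - ‖τ‖ ^ 2) := by
  refine ⟨dist_eq_sqrt_of_inner_eq_norm_sq
    (inner_eq_norm_sq_of_mem_segment_of_inner_sub_eq_zero hseg horth), ?_⟩
  rw [dist_comm]
  refine dist_eq_sqrt_of_inner_eq_norm_sq
    (inner_eq_norm_sq_of_mem_segment_of_inner_sub_eq_zero (segment_symm ℝ v w ▸ hseg) ?_)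
  rw [← neg_sub, inner_neg_left, horth, neg_zero]

end Tangent

-- Both sides are `0 / 0 = 0` when `a + b = 0`.
theorem div_add_eq_sq_add_mul_div_add_sq (a b : ℝ) :
    a / (a + b) = (a ^ 2 + a * b) / (a + b) ^ 2 := by
  rcases eq_or_ne (a + b) 0 with h | h
  · simp [h, sq]
  · field_simp

theorem contact_point_formula_general (v w τ : EuclideanSpace ℝ (Fin 3))
    (hseg : τ ∈ segment ℝ v w) (hτ : ‖τ‖ = 1)
    (horth : (inner ℝ (w - v) τ : ℝ) = 0) :
    τ = v + ((Real.sqrt (‖v‖ ^ 2 - 1) ^ 2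
          + Real.sqrt (‖v‖ ^ 2 - 1) * Real.sqrt (‖w‖ ^ 2 - 1))
        / (Real.sqrt (‖v‖ ^ 2 - 1) + Real.sqrt (‖w‖ ^ 2 - 1)) ^ 2) • (w - v) := by
  obtain ⟨hv, hw⟩ := dist_eq_sqrt_of_tangent_segment hseg horth
  rw [hτ, one_pow] at hv hw
  rw [← div_add_eq_sq_add_mul_div_add_sq, ← hv, ← hw, dist_add_dist_of_mem_segment hseg]
  exact eq_add_div_dist_smul_of_mem_segment hseg

theorem contact_point_formula (v w τ : EuclideanSpace ℝ (Fin 3))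
    (hv : 1 < ‖v‖) (hw : 1 < ‖w‖)
    (hseg : τ ∈ segment ℝ v w) (hτ : ‖τ‖ = 1)
    (horth : (inner ℝ (w - v) τ : ℝ) = 0) :
    τ = v + ((Real.sqrt (‖v‖ ^ 2 - 1) ^ 2
          + Real.sqrt (‖v‖ ^ 2 - 1) * Real.sqrt (‖w‖ ^ 2 - 1))
        / (Real.sqrt (‖v‖ ^ 2 - 1) + Real.sqrt (‖w‖ ^ 2 - 1)) ^ 2) • (w - v) :=
  contact_point_formula_general v w τ hseg hτ horth
end

section
/- If v, w ∈ ℝ³ have rational coordinates, ‖v‖ > 1, ‖w‖ > 1, and the segment [v,w] is tangent to the unit sphere at τ, then τ has rational coordinates; moreover 2·ℓ_v·ℓ_w = ‖w−v‖² − ‖w‖² − ‖v‖² + 2 where ℓ_v = √(‖v‖²−1), ℓ_w = √(‖w‖²−1). -/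
/-!
Write `τ = v + t • (w - v)`. Tangency `⟪w - v, τ⟫ = 0` determines `t` as the rational
number `⟪v - w, v⟫ / ‖w - v‖²`, so `τ` is rational. It also gives `⟪v, τ⟫ = ⟪w, τ⟫ = ‖τ‖² = 1`,
hence `‖v - τ‖² = ‖v‖² - 1` and `‖w - τ‖² = ‖w‖² - 1` (Pythagoras); and since `τ` lies between
`v` and `w`, `‖v - τ‖ ‖w - τ‖ = ⟪τ - v, w - τ⟫ = 1 - ⟪v, w⟫`, which is half the right-hand side.
-/

open RealInnerProductSpace

section Tangency

variable {E : Type*} [NormedAddCommGroup E] [InnerProductSpace ℝ E] {v w τ : E}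

theorem eq_add_inner_div_smul_of_mem_segment (hseg : τ ∈ segment ℝ v w)
    (horth : ⟪w - v, τ⟫ = 0) :
    τ = v + (⟪v - w, v⟫ / ‖w - v‖ ^ 2) • (w - v) := by
  rw [segment_eq_image'] at hseg
  obtain ⟨t, -, rfl⟩ := hseg
  rcases eq_or_ne w v with rfl | hwv
  · simp
  have hnorm : ‖w - v‖ ^ 2 ≠ 0 := pow_ne_zero 2 (norm_ne_zero_iff.2 (sub_ne_zero.2 hwv))
  rw [inner_add_right, real_inner_smul_right, real_inner_self_eq_norm_sq] at horth
  have ht : t = ⟪v - w, v⟫ / ‖w - v‖ ^ 2 := by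
    rw [eq_div_iff hnorm, ← neg_sub w v, inner_neg_left]
    linarith
  rw [← ht]

theorem inner_eq_norm_sq_of_mem_segment (hseg : τ ∈ segment ℝ v w)
    (horth : ⟪w - v, τ⟫ = 0) : ⟪v, τ⟫ = ‖τ‖ ^ 2 := by
  rw [segment_eq_image'] at hseg
  obtain ⟨t, -, rfl⟩ := hseg
  rw [← real_inner_self_eq_norm_sq, inner_add_left v, real_inner_smul_left, horth]
  ring

theorem norm_sub_sq_eq_of_mem_segment (hseg : τ ∈ segment ℝ v w)
    (horth : ⟪w - v, τ⟫ = 0) : ‖v - τ‖ ^ 2 = ‖v‖ ^ 2 - ‖τ‖ ^ 2 := by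
  rw [norm_sub_sq_real, inner_eq_norm_sq_of_mem_segment hseg horth]
  ring

theorem inner_sub_sub_eq_norm_mul_norm_of_mem_segment (hseg : τ ∈ segment ℝ v w) :
    ⟪τ - v, w - τ⟫ = ‖τ - v‖ * ‖w - τ‖ :=
  inner_eq_norm_mul_iff_real.2 (mem_segment_iff_sameRay.1 hseg).norm_smul_eq.symm

theorem two_mul_sqrt_mul_sqrt_of_mem_segment (hseg : τ ∈ segment ℝ v w)
    (horth : ⟪w - v, τ⟫ = 0) :
    2 * √(‖v‖ ^ 2 - ‖τ‖ ^ 2) * √(‖w‖ ^ 2 - ‖τ‖ ^ 2)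
      = ‖w - v‖ ^ 2 - ‖w‖ ^ 2 - ‖v‖ ^ 2 + 2 * ‖τ‖ ^ 2 := by
  have horth' : ⟪v - w, τ⟫ = 0 := by rw [← neg_sub w v, inner_neg_left, horth, neg_zero]
  have hseg' : τ ∈ segment ℝ w v := segment_symm ℝ v w ▸ hseg
  rw [← norm_sub_sq_eq_of_mem_segment hseg horth, ← norm_sub_sq_eq_of_mem_segment hseg' horth',
    Real.sqrt_sq (norm_nonneg _), Real.sqrt_sq (norm_nonneg _), norm_sub_rev v τ,
    mul_assoc, ← inner_sub_sub_eq_norm_mul_norm_of_mem_segment hseg, norm_sub_sq_real w v]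
  have hvτ := inner_eq_norm_sq_of_mem_segment hseg horth
  have hwτ := inner_eq_norm_sq_of_mem_segment hseg' horth'
  simp only [inner_sub_left, inner_sub_right, real_inner_self_eq_norm_sq,
    real_inner_comm τ, real_inner_comm v w] at hvτ hwτ ⊢
  linarith

end Tangency

section Coordinates

variable {ι : Type*} [Fintype ι] (K : Subfield ℝ)

theorem inner_mem_subfield {x y : EuclideanSpace ℝ ι} (hx : ∀ i, x i ∈ K) (hy : ∀ i, y i ∈ K) :
    ⟪x, y⟫ ∈ K := by
  rw [PiLp.inner_apply]
  exact sum_mem fun i _ => by simpa using K.mul_mem (hy i) (hx i)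

theorem apply_mem_subfield_of_mem_segment {v w τ : EuclideanSpace ℝ ι}
    (hv : ∀ i, v i ∈ K) (hw : ∀ i, w i ∈ K)
    (hseg : τ ∈ segment ℝ v w) (horth : ⟪w - v, τ⟫ = 0) (i : ι) : τ i ∈ K := by
  have hsub : ∀ j, (w - v) j ∈ K := fun j => by simpa using K.sub_mem (hw j) (hv j)
  have hvsub : ∀ j, (v - w) j ∈ K := fun j => by simpa using K.sub_mem (hv j) (hw j)
  have ht : ⟪v - w, v⟫ / ‖w - v‖ ^ 2 ∈ K := by
    rw [← real_inner_self_eq_norm_sq]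
    exact K.div_mem (inner_mem_subfield K hvsub hv) (inner_mem_subfield K hsub hsub)
  rw [eq_add_inner_div_smul_of_mem_segment hseg horth]
  simpa using K.add_mem (hv i) (K.mul_mem ht (hsub i))

end Coordinates

theorem contact_point_rational_general (v w τ : EuclideanSpace ℝ (Fin 3))
    (hvQ : ∀ i, ∃ q : ℚ, v i = q) (hwQ : ∀ i, ∃ q : ℚ, w i = q)
    (hseg : τ ∈ segment ℝ v w) (hτ : ‖τ‖ = 1)
    (horth : (inner ℝ (w - v) τ : ℝ) = 0) :
    (∀ i, ∃ q : ℚ, τ i = q) ∧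
    2 * Real.sqrt (‖v‖ ^ 2 - 1) * Real.sqrt (‖w‖ ^ 2 - 1)
      = ‖w - v‖ ^ 2 - ‖w‖ ^ 2 - ‖v‖ ^ 2 + 2 := by
  have hrat : ∀ x : ℝ, (∃ q : ℚ, x = q) ↔ x ∈ (Rat.castHom ℝ).fieldRange := fun x => by
    simp [RingHom.mem_fieldRange, eq_comm]
  refine ⟨fun i => ?_, ?_⟩
  · simp only [hrat] at hvQ hwQ ⊢
    exact apply_mem_subfield_of_mem_segment _ hvQ hwQ hseg horth i
  · simpa [hτ] using two_mul_sqrt_mul_sqrt_of_mem_segment hseg horth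

theorem contact_point_rational (v w τ : EuclideanSpace ℝ (Fin 3))
    (hvQ : ∀ i, ∃ q : ℚ, v i = q) (hwQ : ∀ i, ∃ q : ℚ, w i = q)
    (hv : 1 < ‖v‖) (hw : 1 < ‖w‖)
    (hseg : τ ∈ segment ℝ v w) (hτ : ‖τ‖ = 1)
    (horth : (inner ℝ (w - v) τ : ℝ) = 0) :
    (∀ i, ∃ q : ℚ, τ i = q) ∧
    2 * Real.sqrt (‖v‖ ^ 2 - 1) * Real.sqrt (‖w‖ ^ 2 - 1)
      = ‖w - v‖ ^ 2 - ‖w‖ ^ 2 - ‖v‖ ^ 2 + 2 :=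
  contact_point_rational_general v w τ hvQ hwQ hseg hτ horth
end

section
/- For an integer k ≥ 3, the field ℚ(cos(π/k), sin(π/k)) equals ℚ(cos(π/k)) if and only if k is even; in particular [ℚ(cos(π/k), sin(π/k)) : ℚ] equals φ(2k)/2 if k is even and φ(2k) if k is odd. -/
/-!
Let `ζ = exp (iπ/k)`, a primitive `2k`-th root of unity. Inside `ℂ`, adjoining `i` to the real
field `ℚ(cos, sin)` gives `ℚ(ζ, i)`, the `lcm(2k, 4)`-th cyclotomic field, and adjoining `ζ` to the
real field `ℚ(cos)` gives `ℚ(ζ)`, because `ζ² - 2 cos · ζ + 1 = 0`. Neither `i` nor `ζ` is real, so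
both extensions are quadratic: `2 [ℚ(cos, sin) : ℚ] = φ(lcm(2k, 4))` and `2 [ℚ(cos) : ℚ] = φ(2k)`.
For even `k` the two agree; for odd `k`, `φ(4k) = 2 φ(2k)`.
-/

open IntermediateField Polynomial Module

theorem IntermediateField.finrank_adjoin_insert_of_sq_add_mul_add_eq_zero
    {F E : Type*} [Field F] [Field E] [Algebra F E] {S : Set E} {z a b : E}
    (ha : a ∈ adjoin F S) (hb : b ∈ adjoin F S) (hz : z ∉ adjoin F S)
    (hroot : z ^ 2 + a * z + b = 0) :
    finrank F (adjoin F (insert z S)) = 2 * finrank F (adjoin F S) := by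
  set K := adjoin F S
  set p : K[X] := X ^ 2 + C ⟨a, ha⟩ * X + C ⟨b, hb⟩
  have hp_monic : p.Monic := by unfold p; monicity!
  have hp_deg : p.natDegree = 2 := by unfold p; compute_degree!
  have hp_root : aeval z p = 0 := by simpa [p] using hroot
  have hint : IsIntegral K z := ⟨p, hp_monic, hp_root⟩
  have hdeg : (minpoly K z).natDegree = 2 := by
    refine le_antisymm ?_ ?_
    · exact hp_deg ▸ natDegree_le_of_dvd (minpoly.dvd K z hp_root) hp_monic.ne_zero
    · exact (minpoly.two_le_natDegree_iff hint).mpr fun ⟨y, hy⟩ ↦ hz (hy ▸ y.2)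
  rw [← Set.union_singleton, ← adjoin_adjoin_left]
  change finrank F K⟮z⟯ = _
  rw [← finrank_mul_finrank F K K⟮z⟯, adjoin.finrank hint, hdeg, mul_comm]

theorem IntermediateField.finrank_adjoin_image {F E E' : Type*} [Field F] [Field E] [Field E']
    [Algebra F E] [Algebra F E'] (f : E →ₐ[F] E') (S : Set E) :
    finrank F (adjoin F (f '' S)) = finrank F (adjoin F S) := by
  rw [← adjoin_map]
  exact (equivMap _ f).toLinearEquiv.finrank_eq.symm

section Cyclotomic

variable {L : Type*} [Field L] [CharZero L] {μ ν : L} {m n : ℕ} [NeZero m] [NeZero n]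

-- The `Algebra ℚ` instance of an intermediate field is not reducibly `DivisionRing.toRatAlgebra`,
-- so the instance argument of `IsCyclotomicExtension.finrank` is filled in by unification.
theorem finrank_adjoin_of_isPrimitiveRoot (hμ : IsPrimitiveRoot μ n) :
    finrank ℚ ℚ⟮μ⟯ = n.totient :=
  @IsCyclotomicExtension.finrank n _ ℚ ℚ⟮μ⟯ _ _ _ _
    ((isCyclotomicExtension_singleton_iff_eq_adjoin _ ℚ L _ hμ).mpr rfl)
    (cyclotomic.irreducible_rat (NeZero.pos n))

theorem finrank_adjoin_sup_adjoin_of_isPrimitiveRoot (hμ : IsPrimitiveRoot μ m)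
    (hν : IsPrimitiveRoot ν n) : finrank ℚ ↥(ℚ⟮μ⟯ ⊔ ℚ⟮ν⟯) = (m.lcm n).totient := by
  have := (isCyclotomicExtension_singleton_iff_eq_adjoin _ ℚ L _ hμ).mpr rfl
  have := (isCyclotomicExtension_singleton_iff_eq_adjoin _ ℚ L _ hν).mpr rfl
  have : NeZero (m.lcm n) := ⟨Nat.lcm_ne_zero (NeZero.ne m) (NeZero.ne n)⟩
  exact @IsCyclotomicExtension.finrank _ _ ℚ _ _ _ _ _
    (isCyclotomicExtension_lcm_sup ℚ L m n ℚ⟮μ⟯ ℚ⟮ν⟯) (cyclotomic.irreducible_rat (NeZero.pos _))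

end Cyclotomic

theorem Nat.lcm_two_mul_four_of_even {k : ℕ} (hk : Even k) : (2 * k).lcm 4 = 2 * k :=
  Nat.lcm_eq_left (by obtain ⟨j, rfl⟩ := hk; exact ⟨j, by ring⟩)

theorem Nat.totient_lcm_two_mul_four_of_odd {k : ℕ} (hk : Odd k) :
    ((2 * k).lcm 4).totient = 2 * (2 * k).totient := by
  have hcop : Nat.Coprime k 2 := Nat.coprime_two_right.mpr hk
  rw [show 4 = 2 * 2 from rfl, Nat.lcm_mul_left, hcop.lcm_eq_mul,
    Nat.totient_mul_of_prime_of_dvd Nat.prime_two (dvd_mul_left 2 k), mul_comm k]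

namespace Complex

theorem finrank_adjoin_ofReal_image (S : Set ℝ) :
    finrank ℚ (adjoin ℚ (((↑) : ℝ → ℂ) '' S)) = finrank ℚ (adjoin ℚ S) :=
  finrank_adjoin_image (ofRealAm.restrictScalars ℚ) S

theorem im_eq_zero_of_mem_adjoin_ofReal_image {S : Set ℝ} {z : ℂ}
    (hz : z ∈ adjoin ℚ (((↑) : ℝ → ℂ) '' S)) : z.im = 0 := by
  have : adjoin ℚ (((↑) : ℝ → ℂ) '' S) ≤ (ofRealAm.restrictScalars ℚ).fieldRange :=
    adjoin_le_iff.mpr <| Set.image_subset_range _ _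
  obtain ⟨y, rfl⟩ := this hz
  simp

theorem isPrimitiveRoot_exp_pi_div_mul_I {k : ℕ} (hk : k ≠ 0) :
    IsPrimitiveRoot (exp (↑(Real.pi / k) * I)) (2 * k) := by
  convert isPrimitiveRoot_exp (2 * k) (by omega) using 2
  push_cast
  field_simp

variable (θ : ℝ)

theorem ofReal_cos_eq_exp_add_inv :
    (Real.cos θ : ℂ) = (exp (θ * I) + (exp (θ * I))⁻¹) / 2 := by
  rw [ofReal_cos, ← exp_neg, ← neg_mul, ← two_cos]; ring

theorem ofReal_sin_eq_exp_sub_inv :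
    (Real.sin θ : ℂ) = ((exp (θ * I))⁻¹ - exp (θ * I)) * I / 2 := by
  rw [ofReal_sin, ← exp_neg, ← neg_mul, ← two_sin]; ring

theorem exp_mul_I_sq_sub_two_cos_mul_add_one :
    exp (θ * I) ^ 2 + -(2 * (Real.cos θ : ℂ)) * exp (θ * I) + 1 = 0 := by
  rw [ofReal_cos_eq_exp_add_inv]
  field_simp
  ring

theorem ofReal_cos_mem_adjoin_exp_mul_I : (Real.cos θ : ℂ) ∈ ℚ⟮exp (θ * I)⟯ := by
  have h := mem_adjoin_simple_self ℚ (exp (θ * I))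
  rw [ofReal_cos_eq_exp_add_inv]
  exact div_mem (add_mem h (inv_mem h)) (ofNat_mem _ 2)

theorem adjoin_exp_mul_I_cos : adjoin ℚ {exp (θ * I), (Real.cos θ : ℂ)} = ℚ⟮exp (θ * I)⟯ :=
  le_antisymm
    (adjoin_le_iff.mpr <| Set.insert_subset (mem_adjoin_simple_self ℚ _) <|
      Set.singleton_subset_iff.mpr <| ofReal_cos_mem_adjoin_exp_mul_I θ)
    (adjoin.mono _ _ _ <| by simp)

theorem adjoin_I_cos_sin :
    adjoin ℚ {I, (Real.cos θ : ℂ), (Real.sin θ : ℂ)} = ℚ⟮exp (θ * I)⟯ ⊔ ℚ⟮I⟯ := by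
  have hζ : exp (θ * I) ∈ ℚ⟮exp (θ * I)⟯ ⊔ ℚ⟮I⟯ :=
    le_sup_left (a := ℚ⟮exp (θ * I)⟯) (mem_adjoin_simple_self ℚ _)
  have hI : I ∈ ℚ⟮exp (θ * I)⟯ ⊔ ℚ⟮I⟯ :=
    le_sup_right (a := ℚ⟮exp (θ * I)⟯) (mem_adjoin_simple_self ℚ _)
  refine le_antisymm (adjoin_le_iff.mpr ?_) (sup_le ?_ ?_)
  · refine Set.insert_subset hI (Set.insert_subset ?_ (Set.singleton_subset_iff.mpr ?_))
    · exact le_sup_left (a := ℚ⟮exp (θ * I)⟯) (ofReal_cos_mem_adjoin_exp_mul_I θ)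
    · rw [ofReal_sin_eq_exp_sub_inv]
      exact div_mem (mul_mem (sub_mem (inv_mem hζ) hζ) hI) (ofNat_mem _ 2)
  · rw [adjoin_simple_le_iff, exp_mul_I, ← ofReal_cos, ← ofReal_sin]
    exact add_mem (subset_adjoin _ _ (by simp))
      (mul_mem (subset_adjoin _ _ (by simp)) (subset_adjoin _ _ (by simp)))
  · exact adjoin_simple_le_iff.mpr (subset_adjoin _ _ (by simp))

end Complex

section CosSin

open Complex

variable (θ : ℝ) {n : ℕ} [NeZero n]

theorem two_mul_finrank_adjoin_cos_sin (hζ : IsPrimitiveRoot (exp (θ * I)) n) :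
    2 * finrank ℚ (adjoin ℚ {Real.cos θ, Real.sin θ}) = (n.lcm 4).totient := by
  have hreal := finrank_adjoin_ofReal_image {Real.cos θ, Real.sin θ}
  have hI : I ∉ adjoin ℚ (((↑) : ℝ → ℂ) '' {Real.cos θ, Real.sin θ}) :=
    fun h ↦ by simpa using im_eq_zero_of_mem_adjoin_ofReal_image h
  rw [Set.image_insert_eq, Set.image_singleton] at hreal hI
  have := finrank_adjoin_insert_of_sq_add_mul_add_eq_zero (zero_mem _) (one_mem _) hI
    (by simp)
  rw [adjoin_I_cos_sin, finrank_adjoin_sup_adjoin_of_isPrimitiveRoot hζ isPrimitiveRoot_I,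
    hreal] at this
  exact this.symm

theorem two_mul_finrank_adjoin_cos (hs : Real.sin θ ≠ 0)
    (hζ : IsPrimitiveRoot (exp (θ * I)) n) :
    2 * finrank ℚ (adjoin ℚ {Real.cos θ}) = n.totient := by
  have hreal := finrank_adjoin_ofReal_image {Real.cos θ}
  have hζ_notMem : exp (θ * I) ∉ adjoin ℚ (((↑) : ℝ → ℂ) '' {Real.cos θ}) :=
    fun h ↦ hs <| by simpa using im_eq_zero_of_mem_adjoin_ofReal_image h
  rw [Set.image_singleton] at hreal hζ_notMem
  have hc := mem_adjoin_simple_self ℚ (Real.cos θ : ℂ)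
  have := finrank_adjoin_insert_of_sq_add_mul_add_eq_zero
    (neg_mem (mul_mem (ofNat_mem _ 2) hc)) (one_mem _) hζ_notMem
    (exp_mul_I_sq_sub_two_cos_mul_add_one θ)
  rw [adjoin_exp_mul_I_cos, finrank_adjoin_of_isPrimitiveRoot hζ, hreal] at this
  exact this.symm

end CosSin

theorem adjoin_cos_sin_eq_adjoin_cos_iff_even (k : ℕ) (hk : 3 ≤ k) :
    (IntermediateField.adjoin ℚ {Real.cos (Real.pi / k), Real.sin (Real.pi / k)}
        = IntermediateField.adjoin ℚ {Real.cos (Real.pi / k)} ↔ Even k) ∧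
    (Even k → 2 * Module.finrank ℚ
        (IntermediateField.adjoin ℚ {Real.cos (Real.pi / k), Real.sin (Real.pi / k)})
      = Nat.totient (2 * k)) ∧
    (¬ Even k → Module.finrank ℚ
        (IntermediateField.adjoin ℚ {Real.cos (Real.pi / k), Real.sin (Real.pi / k)})
      = Nat.totient (2 * k)) := by
  have : NeZero (2 * k) := ⟨by omega⟩
  have hζ := Complex.isPrimitiveRoot_exp_pi_div_mul_I (k := k) (by omega)
  have hs : Real.sin (Real.pi / k) ≠ 0 := by
    refine (Real.sin_pos_of_pos_of_lt_pi (by positivity) (div_lt_self Real.pi_pos ?_)).ne'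
    exact_mod_cast (by omega : 1 < k)
  have hF := two_mul_finrank_adjoin_cos_sin _ hζ
  have hD := two_mul_finrank_adjoin_cos _ hs hζ
  have hDF : adjoin ℚ {Real.cos (Real.pi / k)} ≤
      adjoin ℚ {Real.cos (Real.pi / k), Real.sin (Real.pi / k)} :=
    adjoin.mono _ _ _ (by simp)
  have htot := Nat.totient_pos.mpr (Nat.pos_of_ne_zero (NeZero.ne (2 * k)))
  rcases Nat.even_or_odd k with he | ho
  · rw [Nat.lcm_two_mul_four_of_even he] at hF
    have : FiniteDimensional ℚ (adjoin ℚ {Real.cos (Real.pi / k), Real.sin (Real.pi / k)}) :=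
      Module.finite_of_finrank_pos (by omega)
    exact ⟨iff_of_true (eq_of_le_of_finrank_eq hDF (by omega)).symm he, fun _ ↦ hF,
      fun h ↦ (h he).elim⟩
  · have hodd := Nat.not_even_iff_odd.mpr ho
    rw [Nat.totient_lcm_two_mul_four_of_odd ho] at hF
    refine ⟨iff_of_false (fun h ↦ ?_) hodd, fun h ↦ (hodd h).elim, fun _ ↦ by omega⟩
    rw [h] at hF
    omega
end

section
/- For k ≥ 3, the 2(k+1) points (cos(2jπ/k)/cos(π/k), sin(2jπ/k)/cos(π/k), 0) for j = 1,…,k, together with (0, 0, ±1/sin(π/k)), are the vertices of a bipyramid over a k-gon all of whose edges are tangent to the unit sphere, with the sum of all contact points equal to zero. -/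
open Set Real

/-- The equatorial vertices of the bipyramid `B_k`. -/
noncomputable def bipyrEq (k : ℕ) (j : Fin k) : EuclideanSpace ℝ (Fin 3) :=
  WithLp.toLp 2 ![cos (2 * (j.1 + 1) * π / k) / cos (π / k),
    sin (2 * (j.1 + 1) * π / k) / cos (π / k), 0]

/-- The two apexes of the bipyramid `B_k`. -/
noncomputable def bipyrApex (k : ℕ) (b : Bool) : EuclideanSpace ℝ (Fin 3) :=
  WithLp.toLp 2 ![0, 0, if b then 1 / sin (π / k) else -(1 / sin (π / k))]

/-- The segment `[v,w]` is tangent to the unit sphere at `τ`: `τ` is in the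
relative interior of the segment, has norm one, and is orthogonal to the
direction of the segment. -/
def TangentAt (v w τ : EuclideanSpace ℝ (Fin 3)) : Prop :=
  (∃ t ∈ Ioo (0 : ℝ) 1, τ = v + t • (w - v)) ∧ ‖τ‖ = 1 ∧ (inner ℝ (w - v) τ : ℝ) = 0

/-!
The equatorial vertices lie on the circle of radius `1 / cos (π / k)` at angles `2π / k` apart,
so the chord between consecutive ones touches the unit sphere at its midpoint. Each apex edge is
the hypotenuse of a right triangle with the right angle at the origin and legs `1 / sin (π / k)`
and `1 / cos (π / k)`; since `sin² + cos² = 1` its altitude has length one, and the foot of the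
altitude is the contact point. All contact points are affine combinations of the vertices, so
their sum vanishes because the equatorial vertices sum to zero (roots of unity) and the two
apexes are antipodal.
-/

local notation "E³" => EuclideanSpace ℝ (Fin 3)

theorem tangentAt_midpoint {v w : E³} (hvw : ‖v‖ = ‖w‖) (h : ‖v + w‖ = 2) :
    TangentAt v w (v + (2⁻¹ : ℝ) • (w - v)) := by
  have hτ : v + (2⁻¹ : ℝ) • (w - v) = (2⁻¹ : ℝ) • (w + v) := by module
  refine ⟨⟨2⁻¹, by norm_num, rfl⟩, ?_, ?_⟩
  · rw [hτ, norm_smul, add_comm, h]; norm_num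
  · rw [hτ, inner_smul_right, real_inner_comm, (real_inner_add_sub_eq_zero_iff _ _).mpr hvw.symm,
      mul_zero]

/-- The contact point is the foot of the altitude from `0` in the right triangle `0 v w`; the last
hypothesis says that this altitude has length one. -/
theorem tangentAt_of_inner_eq_zero {v w : E³} (hv : v ≠ 0) (hw : w ≠ 0)
    (hvw : inner ℝ v w = 0) (h : (‖v‖ ^ 2)⁻¹ + (‖w‖ ^ 2)⁻¹ = 1) :
    TangentAt v w (v + (‖w‖ ^ 2)⁻¹ • (w - v)) := by
  have hA : 0 < ‖v‖ ^ 2 := by positivity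
  have hB : 0 < ‖w‖ ^ 2 := by positivity
  have hB1 : 1 < ‖w‖ ^ 2 := by
    have : (‖w‖ ^ 2)⁻¹ < 1 := by linarith [inv_pos.mpr hA]
    rwa [inv_lt_one₀ hB] at this
  have hwv : inner ℝ w v = (0 : ℝ) := by rwa [real_inner_comm]
  refine ⟨⟨_, ⟨by positivity, inv_lt_one_of_one_lt₀ hB1⟩, rfl⟩, ?_, ?_⟩
  · rw [← pow_eq_one_iff_of_nonneg (norm_nonneg _) two_ne_zero, ← real_inner_self_eq_norm_sq]
    simp only [inner_add_left, inner_add_right, inner_sub_left, inner_sub_right, inner_smul_left,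
      inner_smul_right, real_inner_self_eq_norm_sq, hvw, hwv, RCLike.conj_to_real]
    field_simp
    field_simp at h
    linear_combination (1 - ‖w‖ ^ 2) * h
  · simp only [inner_add_right, inner_sub_left, inner_smul_right, inner_sub_right,
      real_inner_self_eq_norm_sq, hvw, hwv]
    field_simp
    field_simp at h
    linear_combination h

theorem sin_pi_div_natCast_pos {k : ℕ} (hk : 1 < k) : 0 < sin (π / k) :=
  sin_pos_of_pos_of_lt_pi (by positivity) (div_lt_self pi_pos (by exact_mod_cast hk))

theorem cos_pi_div_natCast_pos {k : ℕ} (hk : 2 < k) : 0 < cos (π / k) :=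
  cos_pos_of_mem_Ioo ⟨by linarith [pi_pos, show 0 < π / k by positivity],
    div_lt_div_of_pos_left pi_pos two_pos (by exact_mod_cast hk)⟩

theorem sum_exp_add_mul_two_pi_div {k : ℕ} (hk : 1 < k) (a : ℝ) :
    ∑ j ∈ Finset.range k, Complex.exp ((a + j * (2 * π / k) : ℝ) * Complex.I) = 0 := by
  have hζ := Complex.isPrimitiveRoot_exp k (by omega)
  calc ∑ j ∈ Finset.range k, Complex.exp ((a + j * (2 * π / k) : ℝ) * Complex.I)
      = ∑ j ∈ Finset.range k,
          Complex.exp (a * Complex.I) * Complex.exp (2 * π * Complex.I / k) ^ j := by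
        refine Finset.sum_congr rfl fun j _ => ?_
        rw [← Complex.exp_nat_mul, ← Complex.exp_add]
        push_cast
        ring_nf
    _ = 0 := by rw [← Finset.mul_sum, hζ.geom_sum_eq_zero hk, mul_zero]

theorem sum_cos_add_mul_two_pi_div {k : ℕ} (hk : 1 < k) (a : ℝ) :
    ∑ j ∈ Finset.range k, cos (a + j * (2 * π / k)) = 0 := by
  simpa only [Complex.re_sum, Complex.exp_ofReal_mul_I_re, Complex.zero_re] using
    congrArg Complex.re (sum_exp_add_mul_two_pi_div hk a)

theorem sum_sin_add_mul_two_pi_div {k : ℕ} (hk : 1 < k) (a : ℝ) :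
    ∑ j ∈ Finset.range k, sin (a + j * (2 * π / k)) = 0 := by
  simpa only [Complex.im_sum, Complex.exp_ofReal_mul_I_im, Complex.zero_im] using
    congrArg Complex.im (sum_exp_add_mul_two_pi_div hk a)

noncomputable def equatorPoint (c θ : ℝ) : E³ := WithLp.toLp 2 ![cos θ / c, sin θ / c, 0]

theorem inner_equatorPoint (c θ φ : ℝ) :
    inner ℝ (equatorPoint c θ) (equatorPoint c φ) = cos (θ - φ) / c ^ 2 := by
  simp [equatorPoint, EuclideanSpace.inner_toLp_toLp, dotProduct, Fin.sum_univ_three, cos_sub]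
  ring

theorem norm_equatorPoint (c θ : ℝ) : ‖equatorPoint c θ‖ = |c|⁻¹ := by
  rw [← sqrt_sq (norm_nonneg _), ← real_inner_self_eq_norm_sq, inner_equatorPoint, sub_self,
    cos_zero, one_div, ← inv_pow, sqrt_sq_eq_abs, abs_inv]

theorem norm_equatorPoint_add_equatorPoint {α : ℝ} (hα : cos α ≠ 0) (φ : ℝ) :
    ‖equatorPoint (cos α) φ + equatorPoint (cos α) (φ + 2 * α)‖ = 2 := by
  rw [← pow_left_inj₀ (norm_nonneg _) zero_le_two two_ne_zero, ← real_inner_self_eq_norm_sq]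
  simp only [inner_add_left, inner_add_right, inner_equatorPoint, sub_self, cos_zero,
    sub_add_cancel_left, add_sub_cancel_left, cos_neg, cos_two_mul]
  field_simp
  ring

theorem equatorPoint_add_nat_mul_two_pi (c θ : ℝ) (n : ℕ) :
    equatorPoint c (θ + n * (2 * π)) = equatorPoint c θ := by
  simp [equatorPoint, cos_add_nat_mul_two_pi, sin_add_nat_mul_two_pi]

theorem bipyrEq_eq_equatorPoint (k : ℕ) (j : Fin k) :
    bipyrEq k j = equatorPoint (cos (π / k)) (2 * (j.1 + 1) * π / k) := rfl

theorem bipyrEq_add_one (k : ℕ) (hk : 1 < k) (j : Fin k) :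
    bipyrEq k (j + ⟨1, hk⟩) =
      equatorPoint (cos (π / k)) (2 * (j.1 + 1) * π / k + 2 * (π / k)) := by
  have hdiv : (((j.1 + 1) % k : ℕ) : ℝ) + k * ((j.1 + 1) / k : ℕ) = j.1 + 1 := by
    exact_mod_cast Nat.mod_add_div (j.1 + 1) k
  rw [bipyrEq_eq_equatorPoint, Fin.val_add, ← equatorPoint_add_nat_mul_two_pi _ _ ((j.1 + 1) / k)]
  congr 1
  field_simp
  linear_combination hdiv

theorem inner_bipyrApex_equatorPoint (k : ℕ) (b : Bool) (c θ : ℝ) :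
    inner ℝ (bipyrApex k b) (equatorPoint c θ) = 0 := by
  simp [bipyrApex, equatorPoint, EuclideanSpace.inner_toLp_toLp, dotProduct, Fin.sum_univ_three]

theorem norm_bipyrApex_sq (k : ℕ) (b : Bool) :
    ‖bipyrApex k b‖ ^ 2 = (sin (π / k) ^ 2)⁻¹ := by
  rw [← real_inner_self_eq_norm_sq, bipyrApex, EuclideanSpace.inner_toLp_toLp]
  cases b <;> simp [dotProduct, Fin.sum_univ_three, sq]

theorem bipyrApex_false (k : ℕ) : bipyrApex k false = -bipyrApex k true := by
  ext i; fin_cases i <;> simp [bipyrApex]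

theorem sum_bipyrEq {k : ℕ} (hk : 1 < k) : ∑ j : Fin k, bipyrEq k j = 0 := by
  have hangle (j : ℕ) : 2 * ((j : ℝ) + 1) * π / k = 2 * π / k + j * (2 * π / k) := by ring
  ext i
  fin_cases i <;>
    simp [bipyrEq, WithLp.ofLp_sum, ← Finset.sum_div, hangle,
      Fin.sum_univ_eq_sum_range (fun j => cos (2 * π / k + j * (2 * π / k))),
      Fin.sum_univ_eq_sum_range (fun j => sin (2 * π / k + j * (2 * π / k))),
      sum_cos_add_mul_two_pi_div hk, sum_sin_add_mul_two_pi_div hk]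

theorem tangentAt_bipyrEq_midpoint {k : ℕ} (hk : 2 < k) (j : Fin k) :
    TangentAt (bipyrEq k j) (bipyrEq k (j + ⟨1, by omega⟩))
      (bipyrEq k j + (2⁻¹ : ℝ) • (bipyrEq k (j + ⟨1, by omega⟩) - bipyrEq k j)) := by
  rw [bipyrEq_add_one, bipyrEq_eq_equatorPoint]
  exact tangentAt_midpoint (by simp only [norm_equatorPoint])
    (norm_equatorPoint_add_equatorPoint (cos_pi_div_natCast_pos hk).ne' _)

theorem tangentAt_bipyrApex_bipyrEq {k : ℕ} (hk : 2 < k) (b : Bool) (j : Fin k) :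
    TangentAt (bipyrApex k b) (bipyrEq k j)
      (bipyrApex k b + cos (π / k) ^ 2 • (bipyrEq k j - bipyrApex k b)) := by
  have hc := (cos_pi_div_natCast_pos hk).ne'
  have hs := (sin_pi_div_natCast_pos (by omega : 1 < k)).ne'
  have hnorm : ‖bipyrEq k j‖ = |cos (π / k)|⁻¹ := norm_equatorPoint _ _
  have h := tangentAt_of_inner_eq_zero (v := bipyrApex k b) (w := bipyrEq k j)
    (norm_ne_zero_iff.mp (by rw [← pow_ne_zero_iff two_ne_zero, norm_bipyrApex_sq]; positivity))
    (norm_ne_zero_iff.mp (by rw [hnorm]; positivity)) (inner_bipyrApex_equatorPoint _ _ _ _)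
    (by rw [norm_bipyrApex_sq, hnorm, inv_inv, inv_pow, sq_abs, inv_inv, sin_sq_add_cos_sq])
  rwa [hnorm, inv_pow, sq_abs, inv_inv] at h

theorem bipyramid_springborn_realization (k : ℕ) (hk : 3 ≤ k) :
    ∃ (τe : Fin k → EuclideanSpace ℝ (Fin 3))
      (τa : Bool → Fin k → EuclideanSpace ℝ (Fin 3)),
      (∀ j : Fin k, TangentAt (bipyrEq k j) (bipyrEq k (j + ⟨1, by omega⟩)) (τe j)) ∧
      (∀ (b : Bool) (j : Fin k), TangentAt (bipyrApex k b) (bipyrEq k j) (τa b j)) ∧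
      (∑ j : Fin k, τe j) + ∑ b : Bool, ∑ j : Fin k, τa b j = 0 := by
  have hk1 : 1 < k := by omega
  have : NeZero k := ⟨by omega⟩
  refine ⟨_, _, tangentAt_bipyrEq_midpoint hk, tangentAt_bipyrApex_bipyrEq hk, ?_⟩
  have hshift : ∑ j, bipyrEq k (j + ⟨1, hk1⟩) = ∑ j, bipyrEq k j :=
    Equiv.sum_comp (Equiv.addRight (⟨1, hk1⟩ : Fin k)) (bipyrEq k)
  simp only [Fintype.sum_bool, bipyrApex_false, Finset.sum_add_distrib, Finset.sum_sub_distrib,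
    ← Finset.smul_sum, sum_bipyrEq hk1, hshift, Finset.sum_const, Finset.card_univ,
    Fintype.card_fin]
  module
end

section
/- For k ≥ 5, let ζ = e^{2πi/k} and α = (ζ²−1)²/((ζ−1)(ζ³−1)). Then α is a real number and [ℚ(α) : ℚ] ≥ φ(k)/4. -/
/-!
The involution `ζ ↦ ζ⁻¹ = conj ζ` fixes `α`, so `α` is real. Clearing denominators, `ζ` is a root of
the palindromic quartic `(1 - α) X⁴ + α X³ - 2 X² + α X + (1 - α)` over `ℚ(α)`, which is nonzero
because of its `X²` coefficient. Hence `[ℚ(α, ζ) : ℚ(α)] ≤ 4`, while `[ℚ(α, ζ) : ℚ] ≥ φ(k)` because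
`ℚ(α, ζ)` contains the `k`-th cyclotomic field.
-/

open Complex Polynomial IntermediateField

section CrossRatio

variable {F : Type*} [Field F]

/-- The cross ratio `(1, z; z², z³)`, after cancelling a common factor `z`. -/
def powCrossRatio (z : F) : F := (z ^ 2 - 1) ^ 2 / ((z - 1) * (z ^ 3 - 1))

theorem map_powCrossRatio {K : Type*} [Field K] (f : F →+* K) (z : F) :
    f (powCrossRatio z) = powCrossRatio (f z) := by
  simp [powCrossRatio, map_div₀]

theorem powCrossRatio_inv (z : F) : powCrossRatio z⁻¹ = powCrossRatio z := by
  rcases eq_or_ne z 0 with rfl | hz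
  · simp
  rw [powCrossRatio, ← mul_div_mul_right _ _ (pow_ne_zero 4 hz), powCrossRatio]
  congr 1 <;> field_simp <;> ring

theorem IsIntegral.powCrossRatio {K L : Type*} [Field K] [Field L] [Algebra K L] {z : L}
    (hz : IsIntegral K z) : IsIntegral K (powCrossRatio z) := by
  have : FiniteDimensional K K⟮z⟯ := adjoin.finiteDimensional hz
  rw [← AdjoinSimple.algebraMap_gen K z, ← map_powCrossRatio]
  exact (IsIntegral.of_finite K _).algebraMap

end CrossRatio

section Quartic

variable {R : Type*} [CommRing R]

noncomputable def crossRatioQuartic (a : R) : R[X] :=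
  C (1 - a) * X ^ 4 + C a * X ^ 3 - C 2 * X ^ 2 + C a * X + C (1 - a)

theorem natDegree_crossRatioQuartic_le (a : R) : (crossRatioQuartic a).natDegree ≤ 4 := by
  unfold crossRatioQuartic
  compute_degree

theorem coeff_crossRatioQuartic_two (a : R) : (crossRatioQuartic a).coeff 2 = -2 := by
  simp only [crossRatioQuartic, coeff_add, coeff_sub, coeff_C_mul, coeff_X_pow, coeff_X, coeff_C]
  norm_num

theorem crossRatioQuartic_ne_zero [NeZero (2 : R)] (a : R) : crossRatioQuartic a ≠ 0 := by
  intro h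
  have h2 := coeff_crossRatioQuartic_two a
  rw [h, coeff_zero, eq_comm, neg_eq_zero] at h2
  exact two_ne_zero h2

theorem aeval_crossRatioQuartic {A : Type*} [Field A] [Algebra R A] {z : A}
    (hz : (z - 1) * (z ^ 3 - 1) ≠ 0) {a : R} (ha : algebraMap R A a = powCrossRatio z) :
    aeval z (crossRatioQuartic a) = 0 := by
  have hα : powCrossRatio z * ((z - 1) * (z ^ 3 - 1)) = (z ^ 2 - 1) ^ 2 := div_mul_cancel₀ _ hz
  simp only [crossRatioQuartic, map_add, map_sub, map_mul, map_pow, aeval_C, aeval_X, map_one,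
    map_ofNat, ha]
  linear_combination -hα

end Quartic

theorem IntermediateField.finrank_adjoin_simple_le_natDegree {K L : Type*} [Field K] [Field L]
    [Algebra K L] {x : L} {p : K[X]} (hp : p ≠ 0) (hx : aeval x p = 0) :
    Module.finrank K K⟮x⟯ ≤ p.natDegree := by
  rw [adjoin.finrank (IsAlgebraic.isIntegral ⟨p, hp, hx⟩)]
  exact natDegree_le_natDegree (minpoly.degree_le_of_ne_zero K x hp hx)

theorem IsPrimitiveRoot.totient_le_finrank_rat {L : Type*} [Field L] [Algebra ℚ L]
    [FiniteDimensional ℚ L] {ζ : L} {k : ℕ} (hζ : IsPrimitiveRoot ζ k) :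
    k.totient ≤ Module.finrank ℚ L := by
  rcases k.eq_zero_or_pos with rfl | hk
  · simp
  simpa using hζ.lcm_totient_le_finrank hζ (by simpa using cyclotomic.irreducible_rat hk)

theorem IsPrimitiveRoot.totient_le_natDegree_mul_finrank {E : Type*} [Field E] [CharZero E]
    (K : IntermediateField ℚ E) [FiniteDimensional ℚ K] {ζ : E} {k : ℕ}
    (hζ : IsPrimitiveRoot ζ k) {p : K[X]} (hp : p ≠ 0) (hroot : aeval ζ p = 0) :
    k.totient ≤ p.natDegree * Module.finrank ℚ K := by
  have : FiniteDimensional K K⟮ζ⟯ :=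
    adjoin.finiteDimensional (IsAlgebraic.isIntegral ⟨p, hp, hroot⟩)
  let L : IntermediateField ℚ E := restrictScalars ℚ K⟮ζ⟯
  have : FiniteDimensional ℚ L := FiniteDimensional.trans ℚ K K⟮ζ⟯
  have hζL : IsPrimitiveRoot (⟨ζ, mem_adjoin_simple_self K ζ⟩ : L) k :=
    hζ.of_map_of_injective (algebraMap L E).injective
  calc k.totient ≤ Module.finrank ℚ L := hζL.totient_le_finrank_rat
    _ = Module.finrank ℚ K * Module.finrank K K⟮ζ⟯ := (Module.finrank_mul_finrank ℚ K K⟮ζ⟯).symm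
    _ ≤ Module.finrank ℚ K * p.natDegree :=
        Nat.mul_le_mul_left _ (finrank_adjoin_simple_le_natDegree hp hroot)
    _ = p.natDegree * Module.finrank ℚ K := Nat.mul_comm _ _

theorem cross_ratio_degree_lower_bound (k : ℕ) (hk : 5 ≤ k) :
    ((exp (2 * Real.pi * I / k) ^ 2 - 1) ^ 2 /
        ((exp (2 * Real.pi * I / k) - 1) * (exp (2 * Real.pi * I / k) ^ 3 - 1))).im = 0 ∧
    Nat.totient k ≤ 4 * Module.finrank ℚ
      (IntermediateField.adjoin ℚ
        {(exp (2 * Real.pi * I / k) ^ 2 - 1) ^ 2 /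
          ((exp (2 * Real.pi * I / k) - 1) * (exp (2 * Real.pi * I / k) ^ 3 - 1))}) := by
  set ζ : ℂ := exp (2 * Real.pi * I / k)
  have hζ : IsPrimitiveRoot ζ k := isPrimitiveRoot_exp k (by omega)
  change (powCrossRatio ζ).im = 0 ∧ k.totient ≤ 4 * Module.finrank ℚ ℚ⟮powCrossRatio ζ⟯
  constructor
  · rw [← conj_eq_iff_im, map_powCrossRatio, ← inv_eq_conj (hζ.norm'_eq_one (by omega)),
      powCrossRatio_inv]
  · have hden : (ζ - 1) * (ζ ^ 3 - 1) ≠ 0 :=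
      mul_ne_zero (sub_ne_zero.mpr (hζ.ne_one (by omega)))
        (sub_ne_zero.mpr (hζ.pow_ne_one_of_pos_of_lt (by norm_num) (by omega)))
    have : FiniteDimensional ℚ ℚ⟮powCrossRatio ζ⟯ :=
      adjoin.finiteDimensional (hζ.isIntegral (by omega)).tower_top.powCrossRatio
    let a := AdjoinSimple.gen ℚ (powCrossRatio ζ)
    calc k.totient ≤ (crossRatioQuartic a).natDegree * Module.finrank ℚ ℚ⟮powCrossRatio ζ⟯ :=
          hζ.totient_le_natDegree_mul_finrank _ (crossRatioQuartic_ne_zero a)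
            (aeval_crossRatioQuartic hden (AdjoinSimple.algebraMap_gen ℚ _))
      _ ≤ 4 * Module.finrank ℚ ℚ⟮powCrossRatio ζ⟯ :=
          Nat.mul_le_mul_right _ (natDegree_crossRatioQuartic_le a)
end

section
/- Let v₁, v₂, v₃ ∈ ℚ³ be the vertices of a triangle whose three edges are tangent to the unit sphere, with tangent lengths ℓᵢ = √(‖vᵢ‖² − 1), and let r be the inradius of the triangle, so r² = 2/((1/ℓ₁ + 1/ℓ₂ + 1/ℓ₃)² − (1/ℓ₁² + 1/ℓ₂² + 1/ℓ₃²)). Then the quantity r·√(1−r²)·(ℓ₁+ℓ₂+ℓ₃) is a rational number. -/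
/-!
If the edge `[vᵢ, vⱼ]` touches the unit sphere at `q`, then `vᵢ - q` and `vⱼ - q` are opposite
vectors orthogonal to `q` of lengths `ℓᵢ` and `ℓⱼ`, so `⟪vᵢ, vⱼ⟫ = 1 - ℓᵢℓⱼ` and `‖vᵢ‖² = 1 + ℓᵢ²`.
With `s = ℓ₁ + ℓ₂ + ℓ₃` and `p = ℓ₁ℓ₂ℓ₃` the Gram determinant of the `vᵢ` is `4p(s - p)`, and the
formula for `r` says `r²s = p`. Hence `(r √(1 - r²) s)² = p(s - p) = (det V / 2)²`, where `V` is the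
rational matrix with rows `vᵢ`.
-/

open Set Matrix
open scoped InnerProductSpace

section Tangency

variable {E : Type*} [NormedAddCommGroup E] [InnerProductSpace ℝ E] {q u : E}

lemma norm_add_smul_sq_of_inner_eq_zero (hq : ‖q‖ = 1) (hu : ⟪u, q⟫_ℝ = 0) (a : ℝ) :
    ‖q + a • u‖ ^ 2 = 1 + a ^ 2 * ‖u‖ ^ 2 := by
  rw [norm_add_sq_real, real_inner_smul_right, real_inner_comm, hu, norm_smul,
    Real.norm_eq_abs, mul_pow, sq_abs, hq]
  ring

lemma sqrt_norm_add_smul_sq_sub_one (hq : ‖q‖ = 1) (hu : ⟪u, q⟫_ℝ = 0) (a : ℝ) :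
    √(‖q + a • u‖ ^ 2 - 1) = |a| * ‖u‖ := by
  rw [norm_add_smul_sq_of_inner_eq_zero hq hu, add_sub_cancel_left, ← mul_pow,
    Real.sqrt_sq_eq_abs, abs_mul, abs_norm]

lemma inner_add_smul_add_smul (hq : ‖q‖ = 1) (hu : ⟪u, q⟫_ℝ = 0) (a b : ℝ) :
    ⟪q + a • u, q + b • u⟫_ℝ = 1 + a * b * ‖u‖ ^ 2 := by
  have hu' : ⟪q, u⟫_ℝ = 0 := by rw [real_inner_comm, hu]
  simp only [inner_add_left, inner_add_right, real_inner_smul_left, real_inner_smul_right,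
    real_inner_self_eq_norm_sq, hq, hu, hu']
  ring

/-- Both endpoints of a segment touching the unit sphere at `q` lie on the tangent line through
`q`, on opposite sides of `q`; the tangent lengths are their distances to `q`. -/
lemma inner_eq_one_sub_sqrt_mul_sqrt_of_tangent {x y : E} {t : ℝ} (ht : t ∈ Icc 0 1)
    (hq : ‖x + t • (y - x)‖ = 1) (hu : ⟪y - x, x + t • (y - x)⟫_ℝ = 0) :
    ⟪x, y⟫_ℝ = 1 - √(‖x‖ ^ 2 - 1) * √(‖y‖ ^ 2 - 1) := by
  set u := y - x
  set q := x + t • u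
  have hx : x = q + (-t) • u := by simp only [q, u]; module
  have hy : y = q + (1 - t) • u := by simp only [q, u]; module
  rw [hx, hy, inner_add_smul_add_smul hq hu, sqrt_norm_add_smul_sq_sub_one hq hu,
    sqrt_norm_add_smul_sq_sub_one hq hu, abs_neg, abs_of_nonneg ht.1,
    abs_of_nonneg (sub_nonneg.2 ht.2)]
  ring

end Tangency

lemma det_gram_eq_sq {ι E : Type*} [Fintype ι] [DecidableEq ι] [NormedAddCommGroup E]
    [InnerProductSpace ℝ E] (b : OrthonormalBasis ι ℝ E) (v : ι → E) :
    (gram ℝ v).det = (of fun i j ↦ b.repr (v j) i).det ^ 2 := by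
  rw [gram_eq_conjTranspose_mul b, det_mul, det_conjTranspose, star_trivial, sq]

lemma exists_rat_det_gram_eq_sq {ι : Type*} [Fintype ι] [DecidableEq ι]
    {v : ι → EuclideanSpace ℝ ι}
    (hv : ∀ i j, ∃ q : ℚ, v i j = q) : ∃ d : ℚ, (gram ℝ v).det = (d : ℝ) ^ 2 := by
  choose w hw using hv
  refine ⟨(of fun i j ↦ w j i).det, ?_⟩
  rw [det_gram_eq_sq (EuclideanSpace.basisFun ι ℝ), Rat.cast_det]
  congr 2
  ext i j
  simp [hw]

/-- The Gram matrix of points outside the unit sphere whose connecting segments are all tangent to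
it, in terms of their tangent lengths `l`. -/
def tangentGram {ι R : Type*} [DecidableEq ι] [CommRing R] (l : ι → R) : Matrix ι ι R :=
  of fun i j ↦ if i = j then 1 + l i ^ 2 else 1 - l i * l j

lemma det_tangentGram {R : Type*} [CommRing R] (l : Fin 3 → R) :
    (tangentGram l).det = 4 * (∏ i, l i) * (∑ i, l i - ∏ i, l i) := by
  simp [tangentGram, det_fin_three, Fin.sum_univ_three, Fin.prod_univ_three]
  ring

lemma sq_sum_one_div_sub_sum_one_div_sq {K : Type*} [Field K] (l : Fin 3 → K)
    (hl : ∀ i, l i ≠ 0) :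
    (∑ i, 1 / l i) ^ 2 - ∑ i, 1 / l i ^ 2 = 2 * (∑ i, l i) / ∏ i, l i := by
  have := hl 0; have := hl 1; have := hl 2
  simp only [Fin.sum_univ_three, Fin.prod_univ_three]
  field_simp
  ring

lemma exists_rat_eq_of_sq_eq_rat_sq {x : ℝ} {q : ℚ} (h : x ^ 2 = (q : ℝ) ^ 2) :
    ∃ q' : ℚ, x = q' := by
  rcases sq_eq_sq_iff_eq_or_eq_neg.1 h with h | h
  · exact ⟨q, h⟩
  · exact ⟨-q, by rw [h, Rat.cast_neg]⟩

theorem inradius_tangent_lengths_rational_general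
    (v : Fin 3 → EuclideanSpace ℝ (Fin 3))
    (hQ : ∀ i j, ∃ q : ℚ, v i j = q)
    (hnorm : ∀ i, 1 < ‖v i‖)
    (htan : ∀ i j, i ≠ j → ∃ t ∈ Ioo (0 : ℝ) 1,
      ‖v i + t • (v j - v i)‖ = 1 ∧ (inner ℝ (v j - v i) (v i + t • (v j - v i)) : ℝ) = 0)
    (r : ℝ)
    (hr2 : r ^ 2 = 2 / ((∑ i, 1 / Real.sqrt (‖v i‖ ^ 2 - 1)) ^ 2
        - ∑ i, 1 / (‖v i‖ ^ 2 - 1))) :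
    ∃ q : ℚ, r * Real.sqrt (1 - r ^ 2) * (∑ i, Real.sqrt (‖v i‖ ^ 2 - 1)) = q := by
  obtain ⟨l, hl⟩ : ∃ l : Fin 3 → ℝ, ∀ i, √(‖v i‖ ^ 2 - 1) = l i := ⟨_, fun _ ↦ rfl⟩
  have hv : ∀ i, 0 < ‖v i‖ ^ 2 - 1 := fun i ↦ by nlinarith [hnorm i, norm_nonneg (v i)]
  have hl_pos : ∀ i, 0 < l i := fun i ↦ hl i ▸ Real.sqrt_pos.2 (hv i)
  have hl_sq : ∀ i, ‖v i‖ ^ 2 - 1 = l i ^ 2 := fun i ↦ by rw [← hl i, Real.sq_sqrt (hv i).le]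
  have hgram : gram ℝ v = tangentGram l := by
    ext i j
    rcases eq_or_ne i j with rfl | hij
    · simp [tangentGram, ← hl_sq]
    · obtain ⟨t, ht, htouch, hperp⟩ := htan i j hij
      have := inner_eq_one_sub_sqrt_mul_sqrt_of_tangent (Ioo_subset_Icc_self ht) htouch hperp
      simp [tangentGram, hij, this, hl]
  obtain ⟨d, hd⟩ := exists_rat_det_gram_eq_sq hQ
  rw [hgram, det_tangentGram] at hd
  simp only [hl] at hr2 ⊢
  simp only [hl_sq] at hr2
  have hinradius : r ^ 2 * ∑ i, l i = ∏ i, l i := by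
    rw [hr2, sq_sum_one_div_sub_sum_one_div_sq l fun i ↦ (hl_pos i).ne']
    have : 0 < ∑ i, l i := Finset.sum_pos (fun i _ ↦ hl_pos i) Finset.univ_nonempty
    have : 0 < ∏ i, l i := Finset.prod_pos fun i _ ↦ hl_pos i
    field_simp
  rcases le_or_gt (1 - r ^ 2) 0 with hr1 | hr1
  · -- `Real.sqrt` is `0` on negative arguments
    exact ⟨0, by simp [Real.sqrt_eq_zero_of_nonpos hr1]⟩
  · refine exists_rat_eq_of_sq_eq_rat_sq (q := d / 2) ?_
    rw [mul_pow, mul_pow, Real.sq_sqrt hr1.le]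
    push_cast
    linear_combination (∑ i, l i - r ^ 2 * ∑ i, l i - ∏ i, l i) * hinradius + hd / 4

theorem inradius_tangent_lengths_rational
    (v : Fin 3 → EuclideanSpace ℝ (Fin 3))
    (hQ : ∀ i j, ∃ q : ℚ, v i j = q)
    (haff : AffineIndependent ℝ v)
    (hnorm : ∀ i, 1 < ‖v i‖)
    (htan : ∀ i j, i ≠ j → ∃ t ∈ Ioo (0 : ℝ) 1,
      ‖v i + t • (v j - v i)‖ = 1 ∧ (inner ℝ (v j - v i) (v i + t • (v j - v i)) : ℝ) = 0)
    (r : ℝ) (hr : 0 < r)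
    (hr2 : r ^ 2 = 2 / ((∑ i, 1 / Real.sqrt (‖v i‖ ^ 2 - 1)) ^ 2
        - ∑ i, 1 / (‖v i‖ ^ 2 - 1))) :
    ∃ q : ℚ, r * Real.sqrt (1 - r ^ 2) * (∑ i, Real.sqrt (‖v i‖ ^ 2 - 1)) = q :=
  inradius_tangent_lengths_rational_general v hQ hnorm htan r hr2
end
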